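/- Let Ω ⊆ ℝⁿ be a bounded open set, p > 0, and let σ : Ω → ℝ be measurable with essinf σ > 0 and σ ≤ 1 almost everywhere. Let D = esssupp(σ − 1), assume m(D) > 0, let ρ ∈ ℝⁿ be a unit vector, and let t < h_D(ρ). Then ∫_Ω (σ(x) − 1) e^{pτ(x·ρ − t)} dx → −∞ as τ → ∞. -/

import Mathlib

open MeasureTheory Filter Set
open scoped RealInnerProductSpace Topology

noncomputable section

/-- The closed half-space `H_{ρ,t} = {x ∈ ℝⁿ : x·ρ ≤ t}`. -/
def halfSpace {n : ℕ} (ρ : EuclideanSpace ℝ (Fin n)) (t : ℝ) :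
    Set (EuclideanSpace ℝ (Fin n)) :=
  {x | ⟪x, ρ⟫ ≤ t}

/-- The essential support of a measurable function `f` on `Ω`: the set `Ω` minus the
union of all open sets `O ⊆ Ω` on which `f = 0` almost everywhere. -/
def essSupport {n : ℕ} (Ω : Set (EuclideanSpace ℝ (Fin n)))
    (f : EuclideanSpace ℝ (Fin n) → ℝ) : Set (EuclideanSpace ℝ (Fin n)) :=
  Ω \ ⋃ O ∈ {O : Set (EuclideanSpace ℝ (Fin n)) |
      IsOpen O ∧ O ⊆ Ω ∧ volume {x ∈ O | f x ≠ 0} = 0}, O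

/-- The essential convex support function `h_A(ρ) = inf {t ∈ ℝ : m(A \ H_{ρ,t}) = 0}`. -/
def essSuppFn {n : ℕ} (A : Set (EuclideanSpace ℝ (Fin n)))
    (ρ : EuclideanSpace ℝ (Fin n)) : ℝ :=
  sInf {t : ℝ | volume (A \ halfSpace ρ t) = 0}

/-- If `essinf σ > 0`, `σ ≤ 1` a.e., `D = esssupp(σ − 1)` has positive measure and
`t < h_D(ρ)`, then `∫_Ω (σ − 1) e^{pτ(x·ρ − t)} dx → −∞` as `τ → ∞`. -/
theorem indicator_integral_blowup_below {n : ℕ} (Ω : Set (EuclideanSpace ℝ (Fin n)))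
    (hΩo : IsOpen Ω) (hΩb : Bornology.IsBounded Ω)
    (p : ℝ) (hp : 0 < p)
    (σ : EuclideanSpace ℝ (Fin n) → ℝ) (hσm : Measurable σ)
    (hlb : ∃ c : ℝ, 0 < c ∧ ∀ᵐ x ∂(volume.restrict Ω), c ≤ σ x)
    (hle : ∀ᵐ x ∂(volume.restrict Ω), σ x ≤ 1)
    (hD : 0 < volume (essSupport Ω (fun x => σ x - 1)))
    (ρ : EuclideanSpace ℝ (Fin n)) (hρ : ‖ρ‖ = 1) (t : ℝ)
    (ht : t < essSuppFn (essSupport Ω (fun x => σ x - 1)) ρ) :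
    Tendsto (fun τ : ℝ =>
        ∫ x in Ω, (σ x - 1) * Real.exp (p * τ * (⟪x, ρ⟫ - t)))
      atTop atBot := by
  obtain ⟨c, hc, hclb⟩ := hlb
  set f : EuclideanSpace ℝ (Fin n) → ℝ := fun x => σ x - 1 with hf
  set D : Set (EuclideanSpace ℝ (Fin n)) := essSupport Ω f with hDdef
  -- Ω is contained in a closed ball of radius R ≥ 0
  obtain ⟨R, hR0, hRΩ⟩ : ∃ R : ℝ, 0 ≤ R ∧ Ω ⊆ Metric.closedBall 0 R := by
    obtain ⟨R, hR⟩ := hΩb.subset_closedBall 0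
    exact ⟨max R 0, le_max_right _ _,
      hR.trans (Metric.closedBall_subset_closedBall (le_max_left _ _))⟩
  have hΩfin : volume Ω < ⊤ :=
    lt_of_le_of_lt (measure_mono hRΩ) (MeasureTheory.measure_closedBall_lt_top)
  -- inner products of points of Ω are bounded by R
  have hinner : ∀ x ∈ Ω, |⟪x, ρ⟫| ≤ R := by
    intro x hx
    calc |⟪x, ρ⟫| ≤ ‖x‖ * ‖ρ‖ := abs_real_inner_le_norm x ρ
    _ = ‖x‖ := by rw [hρ, mul_one]
    _ ≤ R := by simpa using Metric.mem_closedBall.mp (hRΩ hx)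
  -- D is measurable
  have hDmeas : MeasurableSet D :=
    (hΩo.measurableSet).diff (isOpen_biUnion (fun O hO => hO.1)).measurableSet
  -- choose s with t < s < essSuppFn D ρ and volume (D \ halfSpace ρ s) ≠ 0
  set h := essSuppFn D ρ with hh
  set s := (t + h) / 2 with hs
  have hts : t < s := by rw [hs]; linarith
  have hsh : s < h := by rw [hs]; linarith
  have hSnot : volume (D \ halfSpace ρ s) ≠ 0 := by
    intro h0
    have hbdd : BddBelow {u : ℝ | volume (D \ halfSpace ρ u) = 0} := by
      refine ⟨-R, fun u hu => ?_⟩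
      have hpos : 0 < volume (D ∩ halfSpace ρ u) := by
        have := measure_le_inter_add_diff volume D (halfSpace ρ u)
        rw [hu, add_zero] at this
        exact lt_of_lt_of_le hD this
      obtain ⟨x, hxD, hxH⟩ := nonempty_of_measure_ne_zero hpos.ne'
      have hxΩ : x ∈ Ω := hxD.1
      have := hinner x hxΩ
      have : -R ≤ ⟪x, ρ⟫ := by linarith [abs_le.mp this |>.1]
      exact le_trans this hxH
    have : h ≤ s := csInf_le hbdd h0
    linarith
  -- the open slab U
  set U := Ω ∩ {x : EuclideanSpace ℝ (Fin n) | s < ⟪x, ρ⟫} with hU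
  have hUopen : IsOpen U :=
    hΩo.inter (isOpen_lt continuous_const (Continuous.inner continuous_id continuous_const))
  have hUΩ : U ⊆ Ω := Set.inter_subset_left
  have hDU : D \ halfSpace ρ s = D ∩ U := by
    ext x
    simp only [Set.mem_diff, Set.mem_inter_iff, halfSpace, Set.mem_setOf_eq, hU]
    constructor
    · rintro ⟨hxD, hxH⟩
      exact ⟨hxD, hxD.1, not_le.mp hxH⟩
    · rintro ⟨hxD, _, hxs⟩
      exact ⟨hxD, not_le.mpr hxs⟩
  -- f is not a.e. zero on U
  have hUne : volume {x ∈ U | f x ≠ 0} ≠ 0 := by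
    intro h0
    have hUmem : U ∈ {O : Set (EuclideanSpace ℝ (Fin n)) |
        IsOpen O ∧ O ⊆ Ω ∧ volume {x ∈ O | f x ≠ 0} = 0} := ⟨hUopen, hUΩ, h0⟩
    have : D ∩ U = ∅ := by
      apply Set.eq_empty_of_forall_notMem
      rintro x ⟨hxD, hxU⟩
      exact hxD.2 (Set.mem_biUnion hUmem hxU)
    rw [hDU, this] at hSnot
    simp at hSnot
  -- a.e. σ ≤ 1 on Ω as a measure statement
  have hle' : volume {x | x ∈ Ω ∧ ¬ σ x ≤ 1} = 0 := by
    have := (ae_restrict_iff' hΩo.measurableSet).mp hle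
    rw [ae_iff] at this
    convert this using 2
    ext x
    simp only [Set.mem_setOf_eq]
    tauto
  -- so f < 0 on a positive-measure subset of U
  have hUneg : volume {x ∈ U | f x < 0} ≠ 0 := by
    intro h0
    apply hUne
    have hsub : {x ∈ U | f x ≠ 0} ⊆ {x ∈ U | f x < 0} ∪ {x | x ∈ Ω ∧ ¬ σ x ≤ 1} := by
      rintro x ⟨hxU, hxf⟩
      rcases lt_or_gt_of_ne hxf with hlt | hgt
      · exact Or.inl ⟨hxU, hlt⟩
      · exact Or.inr ⟨hUΩ hxU, by simp only [hf] at hgt; push_neg; linarith⟩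
    exact measure_mono_null hsub (by
      exact le_antisymm ((measure_union_le _ _).trans (by rw [h0, hle', add_zero])) zero_le)
  -- find ε > 0 with positive measure of {x ∈ U | f x ≤ -ε}
  obtain ⟨k, hk⟩ : ∃ k : ℕ, volume {x ∈ U | f x ≤ -(1 / (k + 1))} ≠ 0 := by
    by_contra hall
    push_neg at hall
    apply hUneg
    have : {x ∈ U | f x < 0} ⊆ ⋃ k : ℕ, {x ∈ U | f x ≤ -(1 / (k + 1))} := by
      rintro x ⟨hxU, hxf⟩
      obtain ⟨k, hk⟩ := exists_nat_one_div_lt (show (0:ℝ) < -f x by linarith)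
      exact Set.mem_iUnion.mpr ⟨k, hxU, by linarith⟩
    exact measure_mono_null this (measure_iUnion_null hall)
  set ε : ℝ := 1 / (k + 1) with hε
  have hεpos : 0 < ε := by positivity
  set B := {x ∈ U | f x ≤ -ε} with hB
  have hBmeas : MeasurableSet B := by
    have hBeq : B = U ∩ {x | f x ≤ -ε} := by
      ext x; simp only [hB, Set.mem_inter_iff, Set.mem_setOf_eq]
    rw [hBeq]
    exact hUopen.measurableSet.inter
      (measurableSet_le (hσm.sub measurable_const) measurable_const)
  have hBΩ : B ⊆ Ω := fun x hx => hUΩ hx.1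
  have hBfin : volume B < ⊤ := lt_of_le_of_lt (measure_mono hBΩ) hΩfin
  have hBpos : 0 < (volume B).toReal := ENNReal.toReal_pos hk hBfin.ne
  -- integrability of the integrand for each τ
  have hmeasτ : ∀ τ : ℝ, Measurable fun x : EuclideanSpace ℝ (Fin n) =>
      (σ x - 1) * Real.exp (p * τ * (⟪x, ρ⟫ - t)) := by
    intro τ
    apply (hσm.sub measurable_const).mul
    exact (Real.continuous_exp.comp (continuous_const.mul
      ((Continuous.inner continuous_id continuous_const).sub continuous_const))).measurable
  have hint : ∀ τ : ℝ, IntegrableOn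
      (fun x => (σ x - 1) * Real.exp (p * τ * (⟪x, ρ⟫ - t))) Ω volume := by
    intro τ
    have : IsFiniteMeasure (volume.restrict Ω) :=
      ⟨by rwa [Measure.restrict_apply_univ]⟩
    apply Integrable.mono' (integrable_const (Real.exp (|p * τ| * (R + |t|))))
      (hmeasτ τ).aestronglyMeasurable
    filter_upwards [hclb, hle, ae_restrict_mem hΩo.measurableSet] with x h1 h2 hxΩ
    rw [norm_mul, Real.norm_eq_abs, Real.norm_eq_abs, Real.abs_exp]
    have h3 : |σ x - 1| ≤ 1 := abs_le.mpr ⟨by linarith, by linarith⟩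
    have h4 : Real.exp (p * τ * (⟪x, ρ⟫ - t)) ≤ Real.exp (|p * τ| * (R + |t|)) := by
      apply Real.exp_le_exp.mpr
      calc p * τ * (⟪x, ρ⟫ - t) ≤ |p * τ * (⟪x, ρ⟫ - t)| := le_abs_self _
      _ = |p * τ| * |⟪x, ρ⟫ - t| := abs_mul _ _
      _ ≤ |p * τ| * (R + |t|) := by
          apply mul_le_mul_of_nonneg_left _ (abs_nonneg _)
          calc |⟪x, ρ⟫ - t| ≤ |⟪x, ρ⟫| + |t| := abs_sub _ _
          _ ≤ R + |t| := by linarith [hinner x hxΩ]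
    calc |σ x - 1| * Real.exp (p * τ * (⟪x, ρ⟫ - t))
        ≤ 1 * Real.exp (|p * τ| * (R + |t|)) := by
          apply mul_le_mul h3 h4 (Real.exp_pos _).le zero_le_one
    _ = Real.exp (|p * τ| * (R + |t|)) := one_mul _
  -- the comparison function
  have hmain : ∀ᶠ τ : ℝ in atTop,
      (∫ x in Ω, (σ x - 1) * Real.exp (p * τ * (⟪x, ρ⟫ - t)))
        ≤ (volume B).toReal * (-ε * Real.exp (p * (s - t) * τ)) := by
    filter_upwards [eventually_ge_atTop (0:ℝ)] with τ hτ
    set F : EuclideanSpace ℝ (Fin n) → ℝ :=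
      fun x => (σ x - 1) * Real.exp (p * τ * (⟪x, ρ⟫ - t)) with hF
    have hFB : IntegrableOn F B volume := (hint τ).mono_set hBΩ
    have step1 : (∫ x in Ω, F x) ≤ ∫ x in B, F x := by
      have hind : IntegrableOn (B.indicator F) Ω volume := (hint τ).indicator hBmeas
      have hmono : ∀ᵐ x ∂(volume.restrict Ω), F x ≤ B.indicator F x := by
        filter_upwards [hle] with x h2
        by_cases hxB : x ∈ B
        · rw [Set.indicator_of_mem hxB]
        · rw [Set.indicator_of_notMem hxB]
          apply mul_nonpos_of_nonpos_of_nonneg (by linarith) (Real.exp_pos _).le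
      calc (∫ x in Ω, F x) ≤ ∫ x in Ω, B.indicator F x :=
            integral_mono_ae (hint τ) hind hmono
      _ = ∫ x in B, F x := by
            rw [integral_indicator hBmeas, Measure.restrict_restrict hBmeas,
              Set.inter_eq_left.mpr hBΩ]
    have step2 : (∫ x in B, F x) ≤ ∫ _x in B, -ε * Real.exp (p * (s - t) * τ) := by
      apply setIntegral_mono_on hFB (integrableOn_const hBfin.ne) hBmeas
      rintro x ⟨⟨hxΩ, hxs⟩, hxf⟩
      have hst : 0 < s - t := by linarith
      have hE : Real.exp (p * (s - t) * τ) ≤ Real.exp (p * τ * (⟪x, ρ⟫ - t)) := by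
        apply Real.exp_le_exp.mpr
        have hxst : s - t ≤ ⟪x, ρ⟫ - t := by simp only [Set.mem_setOf_eq] at hxs; linarith
        nlinarith [mul_nonneg (mul_nonneg hp.le hτ) (sub_nonneg.mpr hxst)]
      have hfneg : σ x - 1 ≤ -ε := hxf
      calc (σ x - 1) * Real.exp (p * τ * (⟪x, ρ⟫ - t))
          ≤ (σ x - 1) * Real.exp (p * (s - t) * τ) := by
            apply mul_le_mul_of_nonpos_left hE (by linarith)
      _ ≤ -ε * Real.exp (p * (s - t) * τ) :=
            mul_le_mul_of_nonneg_right hfneg (Real.exp_pos _).le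
    calc (∫ x in Ω, F x) ≤ ∫ _x in B, -ε * Real.exp (p * (s - t) * τ) :=
          le_trans step1 step2
    _ = (volume B).toReal * (-ε * Real.exp (p * (s - t) * τ)) := by
          rw [setIntegral_const]; simp [smul_eq_mul, measureReal_def]
  -- conclude
  apply tendsto_atBot_mono' atTop hmain
  have hexp : Tendsto (fun τ : ℝ => Real.exp (p * (s - t) * τ)) atTop atTop := by
    apply Real.tendsto_exp_atTop.comp
    exact Tendsto.const_mul_atTop (by nlinarith) tendsto_id
  have : Tendsto (fun τ : ℝ => -((volume B).toReal * ε) * Real.exp (p * (s - t) * τ))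
      atTop atBot := by
    apply Tendsto.const_mul_atTop_of_neg _ hexp
    · exact neg_neg_iff_pos.mpr (by positivity)
  convert this using 2 with τ
  ring
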